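/- arXiv:2410.21651 — 8 statements merged into one kernel-verified Lean document; each statement's English description precedes it below -/
import Mathlib

section
/- Let a be a positive integer and let E be the equation a·x + a·y = z. Then for every positive integer n, M_E(n) ≤ ⌊n²/(2a⁴) + n/(2a²)⌋; that is, there exists a 2-coloring χ of [n] under which the number of monochromatic ordered triples (x,y,z) ∈ [n]³ with a·x + a·y = z is at most ⌊n²/(2a⁴) + n/(2a²)⌋ (floor of the rational number n²/(2a⁴) + n/(2a²)). -/
/-!
Colour `x` by whether `x ≤ t`, where `t = ⌊n / 2a⌋`. Two large summands give
`z = a (x + y) ≥ 2a (t + 1) > n`, so every monochromatic solution is small, and then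
`a (x + y) = z ≤ t` forces `x, y ≤ ⌊t / a⌋ = ⌊n / 2a²⌋`. Hence there are at most
`⌊n / 2a²⌋² ≤ n² / 4a⁴` monochromatic solutions.
-/

def thresholdColoring (t : ℕ) (x : ℕ) : Fin 2 := if x ≤ t then 0 else 1

def monochromaticSolutions (a n : ℕ) (χ : ℕ → Fin 2) : Finset (ℕ × ℕ × ℕ) :=
  ((Finset.Icc 1 n) ×ˢ (Finset.Icc 1 n) ×ˢ (Finset.Icc 1 n)).filter
    (fun p => a * p.1 + a * p.2.1 = p.2.2 ∧ χ p.1 = χ p.2.1 ∧ χ p.2.1 = χ p.2.2)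

lemma thresholdColoring_eq_iff {t x y : ℕ} :
    thresholdColoring t x = thresholdColoring t y ↔ (x ≤ t ↔ y ≤ t) := by
  unfold thresholdColoring
  by_cases hx : x ≤ t <;> by_cases hy : y ≤ t <;> simp [hx, hy]

lemma mul_add_le_of_mem_monochromaticSolutions {a n t : ℕ} (ht : n < 2 * a * (t + 1))
    {p : ℕ × ℕ × ℕ} (hp : p ∈ monochromaticSolutions a n (thresholdColoring t)) :
    a * (p.1 + p.2.1) ≤ t := by
  obtain ⟨x, y, z⟩ := p
  simp only [monochromaticSolutions, Finset.mem_filter, Finset.mem_product, Finset.mem_Icc,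
    thresholdColoring_eq_iff] at hp
  obtain ⟨⟨-, -, -, hz⟩, hsum, hxy, hyz⟩ := hp
  by_cases hy : y ≤ t
  · exact (mul_add a x y).trans_le (hsum.trans_le (hyz.mp hy))
  · have hlarge : 2 * a * (t + 1) ≤ a * x + a * y := by
      have := Nat.mul_le_mul_left a (show t + 1 ≤ x by omega)
      have := Nat.mul_le_mul_left a (show t + 1 ≤ y by omega)
      linarith
    omega

lemma card_monochromaticSolutions_thresholdColoring_le {a n t : ℕ} (ha : 0 < a)
    (ht : n < 2 * a * (t + 1)) :
    (monochromaticSolutions a n (thresholdColoring t)).card ≤ (t / a) ^ 2 := by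
  calc (monochromaticSolutions a n (thresholdColoring t)).card
      ≤ (Finset.Icc 1 (t / a) ×ˢ Finset.Icc 1 (t / a)).card := by
        refine Finset.card_le_card_of_injOn (fun p => (p.1, p.2.1)) ?_ ?_
        · intro p hp
          have hsmall := mul_add_le_of_mem_monochromaticSolutions ht hp
          have hpos : 1 ≤ p.1 ∧ 1 ≤ p.2.1 := by
            simp only [Finset.mem_coe, monochromaticSolutions, Finset.mem_filter,
              Finset.mem_product, Finset.mem_Icc] at hp
            omega
          simp only [Finset.coe_product, Set.mem_prod, Finset.mem_coe, Finset.mem_Icc,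
            Nat.le_div_iff_mul_le ha]
          refine ⟨⟨hpos.1, ?_⟩, hpos.2, ?_⟩ <;> nlinarith
        · rintro ⟨x, y, z⟩ hp ⟨x', y', z'⟩ hq hxy
          simp only [Finset.mem_coe, monochromaticSolutions, Finset.mem_filter] at hp hq
          simp only [Prod.mk.injEq] at hxy ⊢
          obtain ⟨rfl, rfl⟩ := hxy
          exact ⟨rfl, rfl, hp.2.1.symm.trans hq.2.1⟩
    _ = (t / a) ^ 2 := by simp [sq]

lemma natCast_div_sq_le (n a : ℕ) :
    ((n / (2 * a * a) : ℕ) : ℚ) ^ 2 ≤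
      (n : ℚ) ^ 2 / (2 * (a : ℚ) ^ 4) + (n : ℚ) / (2 * (a : ℚ) ^ 2) := by
  have hm : ((n / (2 * a * a) : ℕ) : ℚ) ≤ (n : ℚ) / (2 * (a : ℚ) ^ 2) := by
    simpa [sq, mul_assoc] using Nat.cast_div_le (α := ℚ) (m := n) (n := 2 * a * a)
  calc ((n / (2 * a * a) : ℕ) : ℚ) ^ 2
      ≤ ((n : ℚ) / (2 * (a : ℚ) ^ 2)) ^ 2 := by gcongr
    _ = (n : ℚ) ^ 2 / (2 * (a : ℚ) ^ 4) / 2 := by ring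
    _ ≤ (n : ℚ) ^ 2 / (2 * (a : ℚ) ^ 4) + (n : ℚ) / (2 * (a : ℚ) ^ 2) := by
        have : (0 : ℚ) ≤ (n : ℚ) ^ 2 / (2 * (a : ℚ) ^ 4) := by positivity
        have : (0 : ℚ) ≤ (n : ℚ) / (2 * (a : ℚ) ^ 2) := by positivity
        linarith

theorem stmt0_general (a : ℕ) (ha : 0 < a) (n : ℕ) :
    ∃ χ : ℕ → Fin 2,
      ((((Finset.Icc 1 n) ×ˢ (Finset.Icc 1 n) ×ˢ (Finset.Icc 1 n)).filter
        (fun p => a * p.1 + a * p.2.1 = p.2.2 ∧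
          χ p.1 = χ p.2.1 ∧ χ p.2.1 = χ p.2.2)).card : ℤ)
      ≤ ⌊(n : ℚ) ^ 2 / (2 * (a : ℚ) ^ 4) + (n : ℚ) / (2 * (a : ℚ) ^ 2)⌋ := by
  refine ⟨thresholdColoring (n / (2 * a)), ?_⟩
  have hcard := card_monochromaticSolutions_thresholdColoring_le ha
    (Nat.lt_mul_div_succ n (by positivity : 0 < 2 * a))
  rw [Nat.div_div_eq_div_mul] at hcard
  rw [Int.le_floor]
  calc (((monochromaticSolutions a n (thresholdColoring (n / (2 * a)))).card : ℤ) : ℚ)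
      ≤ ((n / (2 * a * a) : ℕ) : ℚ) ^ 2 := by
        rw [Int.cast_natCast, ← Nat.cast_pow]; exact_mod_cast hcard
    _ ≤ _ := natCast_div_sq_le n a

/-- For `E : a·x + a·y = z`, there is a 2-coloring of `[n]` with at most
`⌊n²/(2a⁴) + n/(2a²)⌋` monochromatic solutions; i.e. `M_E(n) ≤ ⌊n²/(2a⁴) + n/(2a²)⌋`. -/
theorem stmt0 (a : ℕ) (ha : 0 < a) (n : ℕ) (hn : 0 < n) :
    ∃ χ : ℕ → Fin 2,
      ((((Finset.Icc 1 n) ×ˢ (Finset.Icc 1 n) ×ˢ (Finset.Icc 1 n)).filter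
        (fun p => a * p.1 + a * p.2.1 = p.2.2 ∧
          χ p.1 = χ p.2.1 ∧ χ p.2.1 = χ p.2.2)).card : ℤ)
      ≤ ⌊(n : ℚ) ^ 2 / (2 * (a : ℚ) ^ 4) + (n : ℚ) / (2 * (a : ℚ) ^ 2)⌋ :=
  stmt0_general a ha n
end

section
/- Let a ≥ 3 be an odd integer and let E be the equation x + y = a·z. Then there exists a constant C ≥ 0 such that for every positive integer n, M_E(n) ≤ n²/(4a²) + C·n. -/
/-!
Colour `x` with `1` when `x ≡ a (mod 2a)` or `x mod a ∈ {1, …, (a-1)/2}`, and with `0`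
otherwise. If `x + y = a z`, the residues of `x` and `y` mod `a` add up to `0` or `a`; as `a` is
odd, two nonzero residues adding up to `a` lie in different halves. So in a monochromatic
solution `a` divides `x` and `y`, the colour puts both in the same class `0` or `a` mod `2a`,
hence `z` is even and has the colour of `z mod a`. A monochromatic solution is therefore
determined by `x / 2a`, `y / 2a²` and `z mod a`: the last gives the colour, hence
`x mod 2a = y mod 2a`, and it gives `y mod a²` through `x + y = a z`. This leaves at most
`(n/2a + 1)(n/2a² + 1) a = n²/4a² + O(n)` monochromatic solutions.
-/

open Finset

def oddColoring (a x : ℕ) : Fin 2 :=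
  if x % (2 * a) = a ∨ (0 < x % a ∧ 2 * (x % a) < a) then 1 else 0

section

variable {a x y z : ℕ}

lemma eq_zero_or_eq_of_lt_two_mul_of_mod_eq_zero (hr : x < 2 * a) (h : x % a = 0) :
    x = 0 ∨ x = a := by
  obtain ⟨k, rfl⟩ := Nat.dvd_of_mod_eq_zero h
  have hk : k < 2 := by nlinarith
  interval_cases k <;> simp

lemma mod_two_mul_eq_zero_or_eq (hx : x % a = 0) : x % (2 * a) = 0 ∨ x % (2 * a) = a := by
  rcases Nat.eq_zero_or_pos a with rfl | ha
  · simp_all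
  refine eq_zero_or_eq_of_lt_two_mul_of_mod_eq_zero (Nat.mod_lt _ (by omega)) ?_
  rwa [Nat.mod_mul_left_mod]

lemma mod_two_mul_eq_of_oddColoring_eq (hx : x % a = 0) (hy : y % a = 0)
    (h : oddColoring a x = oddColoring a y) : x % (2 * a) = y % (2 * a) := by
  unfold oddColoring at h
  rcases mod_two_mul_eq_zero_or_eq hx with hx' | hx' <;>
    rcases mod_two_mul_eq_zero_or_eq hy with hy' | hy' <;>
    simp_all

lemma mod_eq_zero_of_oddColoring_eq (ha : Odd a) (hxy : a ∣ x + y)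
    (h : oddColoring a x = oddColoring a y) : x % a = 0 := by
  have ha2 := Nat.odd_iff.mp ha
  have hxa := Nat.mod_lt x ha.pos
  have hya := Nat.mod_lt y ha.pos
  have hsum : x % a + y % a = 0 ∨ x % a + y % a = a := by
    refine eq_zero_or_eq_of_lt_two_mul_of_mod_eq_zero (by omega) ?_
    rwa [← Nat.add_mod, ← Nat.dvd_iff_mod_eq_zero]
  have hx2 : x % (2 * a) = a → x % a = 0 := fun h' => by
    rw [← Nat.mod_mul_left_mod x 2, h', Nat.mod_self]
  have hy2 : y % (2 * a) = a → y % a = 0 := fun h' => by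
    rw [← Nat.mod_mul_left_mod y 2, h', Nat.mod_self]
  unfold oddColoring at h
  split_ifs at h <;> omega

lemma oddColoring_mod_of_even (ha : Odd a) (hz : Even z) :
    oddColoring a (z % a) = oddColoring a z := by
  have hza := Nat.mod_lt z ha.pos
  have hz2a : z % (2 * a) ≠ a := fun h => by
    have := Nat.mod_mul_right_mod z 2 a
    rw [h, Nat.odd_iff.mp ha, Nat.even_iff.mp hz] at this
    exact one_ne_zero this
  unfold oddColoring
  rw [Nat.mod_mod, Nat.mod_eq_of_lt (by omega : z % a < 2 * a)]
  simp only [hza.ne, hz2a, false_or]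

lemma even_of_oddColoring_eq (ha : Odd a) (h : x + y = a * z)
    (hc : oddColoring a x = oddColoring a y) : Even z := by
  have hdvd : a ∣ x + y := ⟨z, h⟩
  have hx := mod_eq_zero_of_oddColoring_eq ha hdvd hc
  have hy := mod_eq_zero_of_oddColoring_eq ha (add_comm x y ▸ hdvd) hc.symm
  have hxy := mod_two_mul_eq_of_oddColoring_eq hx hy hc
  have h2a : 2 * a ∣ a * z := by
    rw [← h, Nat.dvd_iff_mod_eq_zero, Nat.add_mod, ← hxy]
    rcases mod_two_mul_eq_zero_or_eq hx with h0 | h0 <;> simp [h0, ← two_mul]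
  rw [mul_comm a z] at h2a
  exact even_iff_two_dvd.mpr (Nat.dvd_of_mul_dvd_mul_right ha.pos h2a)

lemma eq_of_div_of_mod_eq_of_oddColoring_eq (ha : Odd a) {x' y' z' : ℕ}
    (h : x + y = a * z) (h' : x' + y' = a * z')
    (hc : oddColoring a x = oddColoring a y ∧ oddColoring a y = oddColoring a z)
    (hc' : oddColoring a x' = oddColoring a y' ∧ oddColoring a y' = oddColoring a z')
    (hx : x / (2 * a) = x' / (2 * a)) (hy : y / (2 * a ^ 2) = y' / (2 * a ^ 2))
    (hz : z % a = z' % a) : x = x' ∧ y = y' ∧ z = z' := by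
  have hx0 := mod_eq_zero_of_oddColoring_eq ha ⟨z, h⟩ hc.1
  have hy0 := mod_eq_zero_of_oddColoring_eq ha ⟨z, add_comm x y ▸ h⟩ hc.1.symm
  have hx0' := mod_eq_zero_of_oddColoring_eq ha ⟨z', h'⟩ hc'.1
  have hy0' := mod_eq_zero_of_oddColoring_eq ha ⟨z', add_comm x' y' ▸ h'⟩ hc'.1.symm
  have hcz : oddColoring a z = oddColoring a z' := by
    rw [← oddColoring_mod_of_even ha (even_of_oddColoring_eq ha h hc.1), hz,
      oddColoring_mod_of_even ha (even_of_oddColoring_eq ha h' hc'.1)]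
  have hcx : oddColoring a x = oddColoring a x' := by rw [hc.1, hc.2, hcz, ← hc'.2, ← hc'.1]
  obtain rfl : x = x' := Nat.ext_div_mod hx (mod_two_mul_eq_of_oddColoring_eq hx0 hx0' hcx)
  have hy2a : y ≡ y' [MOD 2 * a] :=
    mod_two_mul_eq_of_oddColoring_eq hy0 hy0' (by rw [← hc.1, hcx, hc'.1])
  have hya2 : y ≡ y' [MOD a ^ 2] := by
    have := Nat.ModEq.mul_left' a hz
    rw [← h, ← h', ← sq] at this
    exact Nat.ModEq.add_left_cancel' x this
  have hcop : Nat.Coprime 2 (a ^ 2) := (Nat.coprime_two_left.mpr ha).pow_right 2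
  obtain rfl : y = y' := Nat.ext_div_modEq hy
    ((Nat.modEq_and_modEq_iff_modEq_mul hcop).mp ⟨hy2a.of_mul_right a, hya2⟩)
  exact ⟨rfl, rfl, Nat.eq_of_mul_eq_mul_left ha.pos (h.symm.trans h')⟩

theorem card_monochromatic_oddColoring_le (ha : Odd a) (n : ℕ) :
    ((Icc 1 n ×ˢ Icc 1 n ×ˢ Icc 1 n).filter fun p => p.1 + p.2.1 = a * p.2.2 ∧
        oddColoring a p.1 = oddColoring a p.2.1 ∧ oddColoring a p.2.1 = oddColoring a p.2.2).card
      ≤ (n / (2 * a) + 1) * (n / (2 * a ^ 2) + 1) * a := by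
  calc _ ≤ (range (n / (2 * a) + 1) ×ˢ range (n / (2 * a ^ 2) + 1) ×ˢ range a).card :=
        card_le_card_of_injOn (fun p => (p.1 / (2 * a), p.2.1 / (2 * a ^ 2), p.2.2 % a)) ?_ ?_
    _ = _ := by simp only [card_product, card_range, mul_assoc]
  · rintro ⟨x, y, z⟩ hp
    simp only [coe_filter, mem_product, mem_Icc, Set.mem_ofPred_eq] at hp
    simp only [coe_product, coe_range, Set.mem_prod, Set.mem_Iio]
    exact ⟨Nat.lt_succ_of_le (Nat.div_le_div_right hp.1.1.2),
      Nat.lt_succ_of_le (Nat.div_le_div_right hp.1.2.1.2), Nat.mod_lt z ha.pos⟩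
  · rintro ⟨x, y, z⟩ hp ⟨x', y', z'⟩ hp' himg
    simp only [coe_filter, mem_product, mem_Icc, Set.mem_ofPred_eq] at hp hp'
    simp only [Prod.mk.injEq] at himg ⊢
    exact eq_of_div_of_mod_eq_of_oddColoring_eq ha hp.2.1 hp'.2.1 hp.2.2 hp'.2.2
      himg.1 himg.2.1 himg.2.2

end

lemma div_two_mul_add_one_mul_le {a n : ℕ} (ha : 0 < a) (hn : 0 < n) :
    (((n / (2 * a) + 1) * (n / (2 * a ^ 2) + 1) * a : ℕ) : ℝ)
      ≤ (n : ℝ) ^ 2 / (4 * (a : ℝ) ^ 2) + ((a : ℝ) + 1) * n := by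
  have ha' : (1 : ℝ) ≤ a := by exact_mod_cast ha
  have hn' : (1 : ℝ) ≤ n := by exact_mod_cast hn
  have hdiv₁ : ((n / (2 * a) : ℕ) : ℝ) ≤ n / (2 * a) := by
    exact_mod_cast Nat.cast_div_le (α := ℝ) (m := n) (n := 2 * a)
  have hdiv₂ : ((n / (2 * a ^ 2) : ℕ) : ℝ) ≤ n / (2 * a ^ 2) := by
    exact_mod_cast Nat.cast_div_le (α := ℝ) (m := n) (n := 2 * a ^ 2)
  have hsmall : (n : ℝ) / (2 * a) ≤ n / 2 := by gcongr; linarith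
  push_cast
  calc (((n / (2 * a) : ℕ) : ℝ) + 1) * (((n / (2 * a ^ 2) : ℕ) : ℝ) + 1) * a
      ≤ (n / (2 * a) + 1) * (n / (2 * a ^ 2) + 1) * a := by gcongr
    _ = n ^ 2 / (4 * a ^ 2) + n / 2 + n / (2 * a) + a := by field_simp; ring
    _ ≤ n ^ 2 / (4 * a ^ 2) + (a + 1) * n := by nlinarith

theorem stmt4_general (a : ℕ) (hodd : Odd a) :
    ∃ C : ℝ, 0 ≤ C ∧ ∀ n : ℕ, 0 < n →
      ∃ χ : ℕ → Fin 2,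
        ((((Finset.Icc 1 n) ×ˢ (Finset.Icc 1 n) ×ˢ (Finset.Icc 1 n)).filter
          (fun p => p.1 + p.2.1 = a * p.2.2 ∧
            χ p.1 = χ p.2.1 ∧ χ p.2.1 = χ p.2.2)).card : ℝ)
        ≤ (n : ℝ) ^ 2 / (4 * (a : ℝ) ^ 2) + C * n := by
  refine ⟨a + 1, by positivity, fun n hn => ⟨oddColoring a, ?_⟩⟩
  calc _ ≤ (((n / (2 * a) + 1) * (n / (2 * a ^ 2) + 1) * a : ℕ) : ℝ) := by
        exact_mod_cast card_monochromatic_oddColoring_le hodd n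
    _ ≤ _ := div_two_mul_add_one_mul_le hodd.pos hn

/-- For odd `a ≥ 3` and `E : x + y = a·z`, there is a constant `C ≥ 0` such that for all
`n ≥ 1` there is a 2-coloring of `[n]` with at most `n²/(4a²) + C·n` monochromatic
solutions, i.e. `M_E(n) ≤ n²/(4a²) + C·n`. -/
theorem stmt4 (a : ℕ) (ha : 3 ≤ a) (hodd : Odd a) :
    ∃ C : ℝ, 0 ≤ C ∧ ∀ n : ℕ, 0 < n →
      ∃ χ : ℕ → Fin 2,
        ((((Finset.Icc 1 n) ×ˢ (Finset.Icc 1 n) ×ˢ (Finset.Icc 1 n)).filter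
          (fun p => p.1 + p.2.1 = a * p.2.2 ∧
            χ p.1 = χ p.2.1 ∧ χ p.2.1 = χ p.2.2)).card : ℝ)
        ≤ (n : ℝ) ^ 2 / (4 * (a : ℝ) ^ 2) + C * n :=
  stmt4_general a hodd
end

section
/- Let a ≥ 3 be an odd integer, let n be a positive integer, and let χ₀ be the 2-coloring of [n] defined as follows: an integer i is colored red if i mod a is one of the odd residues 1, 3, 5, …, a−2, or if i ≡ a (mod 2a); and i is colored blue if i mod a is one of the even residues 2, 4, …, a−1, or if i ≡ 0 (mod 2a). If (x,y,z) ∈ [n]³ satisfies x + y = a·z and χ₀(x) = χ₀(y) = χ₀(z), then a divides x and a divides y. -/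
/-- Let `a ≥ 3` be odd and let `χ₀` color `i` red (`true`) iff `i mod a` is odd
(i.e. `i mod a ∈ {1,3,…,a−2}`) or `i ≡ a (mod 2a)`, and blue otherwise (i.e. iff
`i mod a` is a nonzero even residue or `i ≡ 0 (mod 2a)`). Then any monochromatic
solution `(x,y,z) ∈ [n]³` of `x + y = a·z` has `a ∣ x` and `a ∣ y`. -/
theorem stmt6 (a n : ℕ) (ha : 3 ≤ a) (hodd : Odd a) (hn : 0 < n)
    (χ : ℕ → Bool)
    (hχ : ∀ i, χ i = true ↔ ((i % a) % 2 = 1 ∨ i % (2 * a) = a))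
    (x y z : ℕ) (hx : x ∈ Finset.Icc 1 n) (hy : y ∈ Finset.Icc 1 n)
    (hz : z ∈ Finset.Icc 1 n)
    (heq : x + y = a * z)
    (hxy : χ x = χ y) (hxz : χ x = χ z) :
    a ∣ x ∧ a ∣ y := by
  have ha0 : 0 < a := by omega
  have hdvd : a ∣ x + y := ⟨z, heq⟩
  have haa : a ∣ 2 * a := ⟨2, by ring⟩
  have key : a ∣ x := by
    by_contra hax
    have hr : x % a ≠ 0 := fun h => hax (Nat.dvd_of_mod_eq_zero h)
    have hsum : (x % a + y % a) % a = 0 := by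
      rw [← Nat.add_mod, heq, Nat.mul_mod_right]
    have hxa : x % a < a := Nat.mod_lt _ ha0
    have hya : y % a < a := Nat.mod_lt _ ha0
    obtain ⟨k, hk⟩ := Nat.dvd_of_mod_eq_zero hsum
    have hk2 : k < 2 := by
      by_contra h
      push_neg at h
      have := Nat.mul_le_mul_left a h
      omega
    have hry : y % a ≠ 0 := by
      intro h
      rw [h, Nat.add_zero] at hk
      interval_cases k <;> omega
    have hsa : x % a + y % a = a := by
      interval_cases k <;> omega
    -- second condition impossible for x and y
    have hx2 : x % (2 * a) ≠ a := by
      intro h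
      apply hr
      rw [← Nat.mod_mod_of_dvd x haa, h, Nat.mod_self]
    have hy2 : y % (2 * a) ≠ a := by
      intro h
      apply hry
      rw [← Nat.mod_mod_of_dvd y haa, h, Nat.mod_self]
    have hcx := hχ x
    have hcy := hχ y
    obtain ⟨m, hm⟩ := hodd
    cases hbx : χ x <;> cases hby : χ y <;> simp [hbx, hby, hx2, hy2] at hcx hcy hxy <;> omega
  refine ⟨key, ?_⟩
  exact (Nat.dvd_add_right key).mp hdvd
end

section
/- Let a < b be positive integers with gcd(a,b) = 1, and let E be the equation a·x + b·y = z. Let b⁻¹ be any integer with b·b⁻¹ ≡ 1 (mod a) and let a⁻¹ be any integer with a·a⁻¹ ≡ 1 (mod b). Then for every positive integer n, M_E(n) ≤ Σ_{z = a+b}^{⌊n/(a(a+b))⌋} ( z/(ab) − {b⁻¹·z/a} − {a⁻¹·z/b} + 1 ), where {x} = x − ⌊x⌋ denotes the fractional part of a real number x and the sum is taken to be 0 when ⌊n/(a(a+b))⌋ < a+b. -/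
/-!
Colour `x` with `1` exactly when `t < x < (a + b)(t + 1)`, where `t = ⌊n / (a(a + b))⌋`. If `x` and
`y` both lie in that interval then `z = ax + by ≥ (a + b)(t + 1)`; and since `a ≤ b`, neither `x` nor
`y` can lie above it when `z ≤ n`. So a monochromatic solution has `a + b ≤ z ≤ t`.

For fixed `z`, write `z = ar + bm` with `r = a⁻¹z mod b`. Every solution has `x ≡ r (mod b)`, so it is
`(r + bk, m - ak)` with `0 ≤ k ≤ ⌊m/a⌋`. Since `m ≡ b⁻¹z (mod a)`, the count `⌊m/a⌋ + 1` is exactly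
`z/(ab) - {b⁻¹z/a} - {a⁻¹z/b} + 1` (Popoviciu's formula).
-/

open Finset

theorem Int.modEq_mul_of_mul_add_mul_eq {a b x y z ainv : ℤ} (hainv : a * ainv ≡ 1 [ZMOD b])
    (h : a * x + b * y = z) : x ≡ ainv * z [ZMOD b] := by
  obtain ⟨c, hc⟩ := hainv.dvd
  exact Int.modEq_iff_dvd.mpr ⟨ainv * y - x * c, by linear_combination -ainv * h - x * hc⟩

theorem card_le_ediv_add_one {a b z : ℕ} {r m : ℤ} (ha : 0 < a) (hb : 0 < b) (hrb : r < b)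
    (hz : (z : ℤ) = a * r + b * m) (S : Finset (ℕ × ℕ))
    (hS : ∀ p ∈ S, a * p.1 + b * p.2 = z ∧ (p.1 : ℤ) ≡ r [ZMOD b]) :
    (#S : ℤ) ≤ m / a + 1 := by
  set f : ℕ × ℕ → ℤ := fun p => ((p.1 : ℤ) - r) / b
  have hparam : ∀ p ∈ S, (p.1 : ℤ) = r + b * f p ∧ a * f p + p.2 = m := by
    intro p hp
    obtain ⟨hsol, hmod⟩ := hS p hp
    obtain ⟨k, hk⟩ := hmod.symm.dvd
    have hfk : f p = k := by simp only [f, hk, Int.mul_ediv_cancel_left _ (by omega : (b : ℤ) ≠ 0)]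
    refine ⟨by linear_combination hk - b * hfk, mul_left_cancel₀ (by omega : (b : ℤ) ≠ 0) ?_⟩
    have hsol' : (a : ℤ) * p.1 + b * p.2 = z := by exact_mod_cast hsol
    linear_combination hsol' + hz - a * hk + a * b * hfk
  have hd : -1 ≤ m / a := by
    rw [Int.le_ediv_iff_mul_le (by omega)]
    nlinarith
  have hcard : #S ≤ #(Icc 0 (m / a)) := by
    refine card_le_card_of_injOn f (fun p hp => ?_) (fun p hp q hq hpq => ?_)
    · obtain ⟨hx, hy⟩ := hparam p hp
      simp only [coe_Icc, Set.mem_Icc]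
      constructor
      · nlinarith
      · rw [Int.le_ediv_iff_mul_le (by omega)]
        linarith
    · obtain ⟨hpx, hpy⟩ := hparam p hp
      obtain ⟨hqx, hqy⟩ := hparam q hq
      rw [hpq] at hpx hpy
      have hy : (p.2 : ℤ) = q.2 := by linarith
      exact Prod.ext (by exact_mod_cast hpx.trans hqx.symm) (by exact_mod_cast hy)
  rw [Int.card_Icc] at hcard
  omega

def popoviciuBound (a b : ℕ) (binv ainv : ℤ) (z : ℕ) : ℚ :=
  (z : ℚ) / ((a : ℚ) * b) - Int.fract (((binv * (z : ℤ) : ℤ) : ℚ) / (a : ℚ))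
    - Int.fract (((ainv * (z : ℤ) : ℤ) : ℚ) / (b : ℚ)) + 1

theorem popoviciuBound_eq {a b z : ℕ} {binv ainv m : ℤ} (ha : 0 < a) (hb : 0 < b)
    (hbinv : (b : ℤ) * binv ≡ 1 [ZMOD a]) (hz : (z : ℤ) = a * (ainv * z % b) + b * m) :
    popoviciuBound a b binv ainv z = ((m / a : ℤ) : ℚ) + 1 := by
  have hm : m ≡ binv * z [ZMOD a] :=
    Int.modEq_mul_of_mul_add_mul_eq (x := m) (y := ainv * z % b) hbinv
      (by linear_combination -hz)
  have hfract : Int.fract (((binv * z : ℤ) : ℚ) / a) = Int.fract ((m : ℚ) / a) := by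
    rw [Int.fract_div_intCast_eq_div_intCast_mod, Int.fract_div_intCast_eq_div_intCast_mod, hm]
  have hzq : (z : ℚ) = a * ((ainv * z % b : ℤ) : ℚ) + b * m := by exact_mod_cast hz
  calc popoviciuBound a b binv ainv z = (m : ℚ) / a - Int.fract ((m : ℚ) / a) + 1 := by
        rw [popoviciuBound, hfract, Int.fract_div_intCast_eq_div_intCast_mod (m := ainv * z), hzq]
        field_simp
        ring
    _ = ((m / a : ℤ) : ℚ) + 1 := by rw [Int.self_sub_fract, Rat.floor_intCast_div_natCast]

theorem card_le_popoviciuBound {a b z : ℕ} {binv ainv : ℤ} (ha : 0 < a) (hb : 0 < b)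
    (hbinv : (b : ℤ) * binv ≡ 1 [ZMOD a]) (hainv : (a : ℤ) * ainv ≡ 1 [ZMOD b])
    (S : Finset (ℕ × ℕ)) (hS : ∀ p ∈ S, a * p.1 + b * p.2 = z) :
    (#S : ℚ) ≤ popoviciuBound a b binv ainv z := by
  set r := ainv * z % b
  have hr : r ≡ ainv * z [ZMOD b] := Int.mod_modEq _ _
  have har : (a : ℤ) * r ≡ z [ZMOD b] :=
    calc (a : ℤ) * r ≡ a * (ainv * z) [ZMOD b] := hr.mul_left _
      _ = (a * ainv) * z := by ring
      _ ≡ 1 * z [ZMOD b] := hainv.mul_right _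
      _ = z := one_mul _
  obtain ⟨m, hm⟩ := har.dvd
  have hz : (z : ℤ) = a * r + b * m := by linear_combination hm
  have hmod : ∀ p ∈ S, (p.1 : ℤ) ≡ r [ZMOD b] := fun p hp =>
    (Int.modEq_mul_of_mul_add_mul_eq (y := p.2) hainv (by exact_mod_cast hS p hp)).trans hr.symm
  rw [popoviciuBound_eq ha hb hbinv hz]
  exact_mod_cast card_le_ediv_add_one ha hb (Int.emod_lt_of_pos _ (by omega)) hz S
    fun p hp => ⟨hS p hp, hmod p hp⟩

def intervalColoring (l u x : ℕ) : Fin 2 := if l < x ∧ x < u then 1 else 0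

theorem intervalColoring_eq_iff {l u x y : ℕ} :
    intervalColoring l u x = intervalColoring l u y ↔ (l < x ∧ x < u ↔ l < y ∧ y < u) := by
  unfold intervalColoring
  split_ifs <;> simp only [Fin.isValue, zero_ne_one, one_ne_zero] <;> tauto

theorem le_of_intervalColoring_eq {a b t n x y z : ℕ} (ha : 0 < a) (hab : a ≤ b)
    (hn : n < a * (a + b) * (t + 1)) (h : a * x + b * y = z) (hzn : z ≤ n)
    (hxy : intervalColoring t ((a + b) * (t + 1)) x = intervalColoring t ((a + b) * (t + 1)) y)
    (hyz : intervalColoring t ((a + b) * (t + 1)) y = intervalColoring t ((a + b) * (t + 1)) z) :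
    z ≤ t := by
  rw [intervalColoring_eq_iff] at hxy hyz
  have hx : x < (a + b) * (t + 1) := by nlinarith
  have hy : y < (a + b) * (t + 1) := by nlinarith
  by_contra! htz
  by_cases hz : z < (a + b) * (t + 1)
  · have hty := hyz.2 ⟨htz, hz⟩
    have htx := hxy.2 hty
    nlinarith [hty.1, htx.1]
  · have hyt : y ≤ t := by have := hyz.not.2 (by omega); omega
    have hxt : x ≤ t := by have := hxy.not.2 (by omega); omega
    nlinarith

theorem monochromatic_subset_biUnion {a b t n : ℕ} (ha : 0 < a) (hab : a ≤ b)
    (hn : n < a * (a + b) * (t + 1)) :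
    (Icc 1 n ×ˢ Icc 1 n ×ˢ Icc 1 n).filter (fun p => a * p.1 + b * p.2.1 = p.2.2 ∧
        intervalColoring t ((a + b) * (t + 1)) p.1 = intervalColoring t ((a + b) * (t + 1)) p.2.1 ∧
        intervalColoring t ((a + b) * (t + 1)) p.2.1 = intervalColoring t ((a + b) * (t + 1)) p.2.2)
      ⊆ (Icc (a + b) t).biUnion fun z =>
          ((Icc 1 n ×ˢ Icc 1 n).filter fun q => a * q.1 + b * q.2 = z).image
            fun q => (q.1, q.2, z) := by
  rintro ⟨x, y, z⟩ hp
  simp only [mem_filter, mem_product, mem_Icc] at hp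
  obtain ⟨⟨⟨hx1, hxn⟩, ⟨hy1, hyn⟩, -, hzn⟩, h, hxy, hyz⟩ := hp
  have hzt := le_of_intervalColoring_eq ha hab hn h hzn hxy hyz
  simp only [mem_biUnion, mem_image, mem_filter, mem_product, mem_Icc]
  exact ⟨z, ⟨by nlinarith, hzt⟩, (x, y), ⟨⟨⟨hx1, hxn⟩, hy1, hyn⟩, h⟩, rfl⟩

theorem stmt7_general (a b : ℕ) (ha : 0 < a) (hb : 0 < b) (hab : a < b)
    (binv ainv : ℤ)
    (hbinv : (b : ℤ) * binv ≡ 1 [ZMOD (a : ℤ)])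
    (hainv : (a : ℤ) * ainv ≡ 1 [ZMOD (b : ℤ)])
    (n : ℕ) :
    ∃ χ : ℕ → Fin 2,
      ((((Finset.Icc 1 n) ×ˢ (Finset.Icc 1 n) ×ˢ (Finset.Icc 1 n)).filter
        (fun p => a * p.1 + b * p.2.1 = p.2.2 ∧
          χ p.1 = χ p.2.1 ∧ χ p.2.1 = χ p.2.2)).card : ℚ)
      ≤ ∑ z ∈ Finset.Icc (a + b) (n / (a * (a + b))),
          ((z : ℚ) / ((a : ℚ) * b)
            - Int.fract (((binv * (z : ℤ) : ℤ) : ℚ) / (a : ℚ))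
            - Int.fract (((ainv * (z : ℤ) : ℤ) : ℚ) / (b : ℚ)) + 1) := by
  set t := n / (a * (a + b))
  have hn : n < a * (a + b) * (t + 1) := Nat.lt_mul_div_succ n (by positivity)
  refine ⟨intervalColoring t ((a + b) * (t + 1)), ?_⟩
  calc _ ≤ ∑ z ∈ Icc (a + b) t,
        (#((Icc 1 n ×ˢ Icc 1 n).filter fun q => a * q.1 + b * q.2 = z) : ℚ) := by
        exact_mod_cast (card_le_card (monochromatic_subset_biUnion ha hab.le hn)).trans
          (card_biUnion_le.trans (sum_le_sum fun z _ => card_image_le))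
    _ ≤ _ := sum_le_sum fun z _ =>
        card_le_popoviciuBound ha hb hbinv hainv _ fun q hq => (mem_filter.1 hq).2

/-- For `a < b` with `gcd(a,b) = 1` and `E : a·x + b·y = z`, with `b⁻¹ = binv` an inverse
of `b` mod `a` and `a⁻¹ = ainv` an inverse of `a` mod `b`, for every `n ≥ 1` there is a
2-coloring of `[n]` whose number of monochromatic solutions is at most
`Σ_{z=a+b}^{⌊n/(a(a+b))⌋} ( z/(ab) − {binv·z/a} − {ainv·z/b} + 1 )`. -/
theorem stmt7 (a b : ℕ) (ha : 0 < a) (hb : 0 < b) (hab : a < b)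
    (hgcd : Nat.gcd a b = 1)
    (binv ainv : ℤ)
    (hbinv : (b : ℤ) * binv ≡ 1 [ZMOD (a : ℤ)])
    (hainv : (a : ℤ) * ainv ≡ 1 [ZMOD (b : ℤ)])
    (n : ℕ) (hn : 0 < n) :
    ∃ χ : ℕ → Fin 2,
      ((((Finset.Icc 1 n) ×ˢ (Finset.Icc 1 n) ×ˢ (Finset.Icc 1 n)).filter
        (fun p => a * p.1 + b * p.2.1 = p.2.2 ∧
          χ p.1 = χ p.2.1 ∧ χ p.2.1 = χ p.2.2)).card : ℚ)
      ≤ ∑ z ∈ Finset.Icc (a + b) (n / (a * (a + b))),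
          ((z : ℚ) / ((a : ℚ) * b)
            - Int.fract (((binv * (z : ℤ) : ℤ) : ℚ) / (a : ℚ))
            - Int.fract (((ainv * (z : ℤ) : ℤ) : ℚ) / (b : ℚ)) + 1) :=
  stmt7_general a b ha hb hab binv ainv hbinv hainv n
end

section
/- There exists a constant C ≥ 0 such that for every positive integer n, M_Schur(n,3) ≤ n²/67 + C·n; that is, there is a 3-coloring of [n] under which the number of monochromatic ordered triples (x,y,z) ∈ [n]³ with x + y = z is at most n²/67 + C·n. -/
/-!
Split `[n]` into 67 consecutive blocks of length `t = ⌊n/67⌋ + 1` and colour block `i` by a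
fixed pattern. A Schur triple `x + y = z` with `x` in block `i` and `y` in block `j` has `z` in
block `i + j + e` with carry `e ∈ {0, 1}`, and inside one such block triple the triple is
determined by the unordered pair of offsets of `x` and `z` in their blocks (their order is
fixed by `e`), so each block triple carries at most `t (t + 1) / 2` Schur triples. The
pattern has 134 monochromatic block triples, giving `67 t (t + 1) = n² / 67 + O(n)`.
-/

open Finset

namespace Nat

variable {t : ℕ}

theorem add_add_one_div (ht : 0 < t) (a b : ℕ) :
    (a + b + 1) / t = a / t + b / t + (a % t + b % t + 1) / t := by
  have hsplit : a + b + 1 = (a % t + b % t + 1) + t * (a / t + b / t) := by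
    have := Nat.div_add_mod a t
    have := Nat.div_add_mod b t
    rw [Nat.mul_add]
    omega
  rw [hsplit, Nat.add_mul_div_left _ _ ht]
  omega

theorem add_add_one_mod (a b : ℕ) : (a + b + 1) % t = (a % t + b % t + 1) % t := by
  rw [Nat.add_mod, Nat.add_mod a, Nat.add_mod (a % t + b % t)]

theorem add_add_one_div_le_one {a b : ℕ} (ha : a < t) (hb : b < t) : (a + b + 1) / t ≤ 1 :=
  Nat.le_of_lt_succ <| (Nat.div_lt_iff_lt_mul (by omega)).2 (by omega)

theorem lt_add_add_one_mod_iff {a b : ℕ} (ha : a < t) (hb : b < t) :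
    a < (a + b + 1) % t ↔ (a + b + 1) / t = 0 := by
  have hdiv := Nat.div_add_mod (a + b + 1) t
  have hmod := Nat.mod_lt (a + b + 1) (show 0 < t by omega)
  rcases Nat.le_one_iff_eq_zero_or_eq_one.1 (add_add_one_div_le_one ha hb) with h | h <;>
    rw [h] at hdiv ⊢ <;> omega

/-- The carry decides which of the two residues is the larger, so the unordered pair suffices. -/
theorem eq_of_div_eq_of_sym2_mod_eq {a₁ b₁ a₂ b₂ : ℕ} (ht : 0 < t)
    (ha : a₁ / t = a₂ / t) (hb : b₁ / t = b₂ / t)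
    (hcarry : (a₁ + b₁ + 1) / t - a₁ / t - b₁ / t = (a₂ + b₂ + 1) / t - a₂ / t - b₂ / t)
    (hmod : s(a₁ % t, (a₁ + b₁ + 1) % t) = s(a₂ % t, (a₂ + b₂ + 1) % t)) :
    a₁ = a₂ ∧ b₁ = b₂ := by
  have hsub (u v w : ℕ) : u + v + w - u - v = w := by omega
  rw [Nat.add_add_one_div ht, Nat.add_add_one_div ht a₂, hsub, hsub] at hcarry
  have horder : a₁ % t < (a₁ + b₁ + 1) % t ↔ a₂ % t < (a₂ + b₂ + 1) % t := by
    simp only [Nat.add_add_one_mod a₁, Nat.add_add_one_mod a₂,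
      Nat.lt_add_add_one_mod_iff (Nat.mod_lt _ ht) (Nat.mod_lt _ ht), hcarry]
  obtain ⟨hamod, hcmod⟩ : a₁ % t = a₂ % t ∧ (a₁ + b₁ + 1) % t = (a₂ + b₂ + 1) % t := by
    rcases Sym2.eq_iff.1 hmod with h | h
    · exact h
    · omega
  have ha' : a₁ = a₂ := by rw [← Nat.div_add_mod a₁ t, ha, hamod, Nat.div_add_mod]
  have hc' : a₁ + b₁ + 1 = a₂ + b₂ + 1 := by
    rw [← Nat.div_add_mod (a₁ + b₁ + 1) t, hcmod, Nat.add_add_one_div ht, ha, hb, hcarry,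
      ← Nat.add_add_one_div ht, Nat.div_add_mod]
  omega

end Nat

section BlockColoring

variable {α : Type*} [DecidableEq α]

def monoSchurTriples (χ : ℕ → α) (n : ℕ) : Finset (ℕ × ℕ × ℕ) :=
  {p ∈ Icc 1 n ×ˢ Icc 1 n ×ˢ Icc 1 n | p.1 + p.2.1 = p.2.2 ∧ χ p.1 = χ p.2.1 ∧ χ p.2.1 = χ p.2.2}

/-- Colour the consecutive blocks `[t i + 1, t i + t]` of length `t` by `c i`; with this
1-based indexing, `x + y = z` reads `(x - 1) + (y - 1) + 1 = z - 1`. -/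
def blockColoring (c : ℕ → α) (t x : ℕ) : α := c ((x - 1) / t)

/-- `((i, j), e)` records blocks `i`, `j` and `i + j + e`, where `e ∈ {0, 1}` is the carry. -/
def monoBlockTriples (c : ℕ → α) (m : ℕ) : Finset ((ℕ × ℕ) × ℕ) :=
  {b ∈ (range m ×ˢ range m) ×ˢ range 2 |
    b.1.1 + b.1.2 + b.2 < m ∧ c b.1.1 = c b.1.2 ∧ c b.1.2 = c (b.1.1 + b.1.2 + b.2)}

def blockTripleOf (t : ℕ) (p : ℕ × ℕ × ℕ) : (ℕ × ℕ) × ℕ :=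
  (((p.1 - 1) / t, (p.2.1 - 1) / t), (p.2.2 - 1) / t - (p.1 - 1) / t - (p.2.1 - 1) / t)

theorem mem_monoSchurTriples {χ : ℕ → α} {n : ℕ} {p : ℕ × ℕ × ℕ} :
    p ∈ monoSchurTriples χ n ↔ (1 ≤ p.1 ∧ p.1 ≤ n) ∧ (1 ≤ p.2.1 ∧ p.2.1 ≤ n) ∧
      (1 ≤ p.2.2 ∧ p.2.2 ≤ n) ∧ p.1 + p.2.1 = p.2.2 ∧ χ p.1 = χ p.2.1 ∧ χ p.2.1 = χ p.2.2 := by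
  simp only [monoSchurTriples, mem_filter, mem_product, mem_Icc, and_assoc]

theorem blockTripleOf_mem_monoBlockTriples (c : ℕ → α) {m t n : ℕ} (ht : 0 < t)
    (hn : n ≤ m * t) {p : ℕ × ℕ × ℕ} (hp : p ∈ monoSchurTriples (blockColoring c t) n) :
    blockTripleOf t p ∈ monoBlockTriples c m := by
  obtain ⟨⟨hx, -⟩, ⟨hy, -⟩, ⟨-, hzn⟩, hsum, hc₁, hc₂⟩ := mem_monoSchurTriples.1 hp
  have hz : p.2.2 - 1 = (p.1 - 1) + (p.2.1 - 1) + 1 := by omega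
  obtain ⟨e, he, hk⟩ : ∃ e < 2, (p.2.2 - 1) / t = (p.1 - 1) / t + (p.2.1 - 1) / t + e :=
    ⟨_, Nat.lt_succ_of_le (Nat.add_add_one_div_le_one (Nat.mod_lt _ ht) (Nat.mod_lt _ ht)),
      by rw [hz, Nat.add_add_one_div ht]⟩
  have hlt {x : ℕ} (hx : x ≤ n) : (x - 1) / t < m := (Nat.div_lt_iff_lt_mul ht).2 (by omega)
  simp only [monoBlockTriples, blockTripleOf, blockColoring, mem_filter, mem_product,
    mem_range] at hc₁ hc₂ ⊢
  rw [show (p.2.2 - 1) / t - (p.1 - 1) / t - (p.2.1 - 1) / t = e by omega, ← hk]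
  exact ⟨⟨⟨hlt (by omega), hlt (by omega)⟩, he⟩, hlt hzn, hc₁, hc₂⟩

theorem card_filter_blockTripleOf_eq_le (χ : ℕ → α) {t : ℕ} (ht : 0 < t) (n : ℕ)
    (b : (ℕ × ℕ) × ℕ) :
    #{p ∈ monoSchurTriples χ n | blockTripleOf t p = b} ≤ (t + 1).choose 2 := by
  rw [show (t + 1).choose 2 = #(range t).sym2 by rw [card_sym2, card_range]]
  refine card_le_card_of_injOn (fun p => s((p.1 - 1) % t, (p.2.2 - 1) % t)) ?_ ?_
  · intro p _
    simp only [coe_sym2, Set.mk_mem_sym2_iff, coe_range, Set.mem_Iio]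
    exact ⟨Nat.mod_lt _ ht, Nat.mod_lt _ ht⟩
  · intro p hp q hq hpq
    simp only [coe_filter, Set.mem_ofPred_eq, mem_monoSchurTriples] at hp hq
    obtain ⟨⟨⟨hx₁, -⟩, ⟨hy₁, -⟩, -, hsum₁, -⟩, hb₁⟩ := hp
    obtain ⟨⟨⟨hx₂, -⟩, ⟨hy₂, -⟩, -, hsum₂, -⟩, hb₂⟩ := hq
    have hz₁ : p.2.2 - 1 = (p.1 - 1) + (p.2.1 - 1) + 1 := by omega
    have hz₂ : q.2.2 - 1 = (q.1 - 1) + (q.2.1 - 1) + 1 := by omega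
    rw [← hb₂] at hb₁
    simp only [blockTripleOf, Prod.mk.injEq, hz₁, hz₂] at hb₁ hpq
    obtain ⟨⟨hi, hj⟩, he⟩ := hb₁
    obtain ⟨ha, hb⟩ := Nat.eq_of_div_eq_of_sym2_mod_eq ht hi hj he hpq
    ext <;> omega

theorem card_monoSchurTriples_blockColoring_le (c : ℕ → α) {m t n : ℕ} (ht : 0 < t)
    (hn : n ≤ m * t) :
    #(monoSchurTriples (blockColoring c t) n) ≤ (t + 1).choose 2 * #(monoBlockTriples c m) :=
  card_le_mul_card_image_of_maps_to (fun _ => blockTripleOf_mem_monoBlockTriples c ht hn) _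
    fun b _ => card_filter_blockTripleOf_eq_le _ ht n b

end BlockColoring

def schurPattern (i : ℕ) : Fin 3 :=
  [0, 0, 0, 0, 0, 0, 0, 0, 0, 0, 1, 1, 1, 1, 1, 1, 1, 1, 1, 1, 1, 1, 1, 1, 0, 0, 2, 2, 2, 2, 2, 2, 2,
    2, 2, 2, 2, 2, 2, 2, 2, 2, 2, 2, 2, 2, 2, 2, 2, 2, 2, 2, 2, 2, 0, 1, 1, 1, 1, 1, 1, 1, 1, 1, 1, 1,
    0].getD i 0

set_option maxRecDepth 100000 in
theorem card_monoBlockTriples_schurPattern : #(monoBlockTriples schurPattern 67) = 134 := by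
  decide

/-- There is a constant `C ≥ 0` such that for every `n ≥ 1` there is a 3-coloring of `[n]`
with at most `n²/67 + C·n` monochromatic Schur triples, i.e.
`M_Schur(n,3) ≤ n²/67 + C·n`. -/
theorem stmt12 :
    ∃ C : ℝ, 0 ≤ C ∧ ∀ n : ℕ, 0 < n →
      ∃ χ : ℕ → Fin 3,
        ((((Finset.Icc 1 n) ×ˢ (Finset.Icc 1 n) ×ˢ (Finset.Icc 1 n)).filter
          (fun p => p.1 + p.2.1 = p.2.2 ∧
            χ p.1 = χ p.2.1 ∧ χ p.2.1 = χ p.2.2)).card : ℝ)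
        ≤ (n : ℝ) ^ 2 / 67 + C * n := by
  refine ⟨137, by norm_num, fun n hn => ⟨blockColoring schurPattern (n / 67 + 1), ?_⟩⟩
  have hcount := card_monoSchurTriples_blockColoring_le schurPattern (m := 67) (n := n)
    (Nat.succ_pos (n / 67)) (by omega)
  rw [card_monoBlockTriples_schurPattern] at hcount
  have ht : ((n / 67 + 1 : ℕ) : ℝ) ≤ n / 67 + 1 := by
    push_cast
    linarith [Nat.cast_div_le (α := ℝ) (m := n) (n := 67)]
  have hn' : (1 : ℝ) ≤ n := by exact_mod_cast hn
  calc (#(monoSchurTriples (blockColoring schurPattern (n / 67 + 1)) n) : ℝ)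
      ≤ ((n / 67 + 1 + 1).choose 2 * 134 : ℕ) := by exact_mod_cast hcount
    _ = 67 * (((n / 67 + 1 : ℕ) : ℝ) + 1) * ((n / 67 + 1 : ℕ) : ℝ) := by
      rw [Nat.cast_mul, Nat.cast_choose_two]
      push_cast
      ring
    _ ≤ 67 * ((n / 67 + 1) + 1) * (n / 67 + 1) := by gcongr
    _ ≤ (n : ℝ) ^ 2 / 67 + 137 * n := by nlinarith
end

section
/- There exists a constant C ≥ 0 such that for every positive integer n and every 2-coloring χ of [n], the number of monochromatic ordered triples (x,y,z) ∈ [n]³ with x + y = z is at least n²/11 − C·n. -/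
set_option maxHeartbeats 1000000

open Finset

/-- ±1 value of a color. -/
def s14F : Fin 2 → ℤ := fun a => if a = 0 then 1 else -1

/-- ±1 coloring function. -/
def s14f (χ : ℕ → Fin 2) (x : ℕ) : ℤ := s14F (χ x)

/-- Partial sums of the ±1 coloring over `[1, j]`. -/
def s14S (χ : ℕ → Fin 2) (j : ℕ) : ℤ := ∑ i ∈ Finset.Ioc 0 j, s14f χ i

/-- The piecewise-quadratic potential. -/
def s14Phi (T y : ℤ) : ℤ :=
  if 3 * y ≤ T + 2 then 3 * y ^ 2 - 2 * T * y - T ^ 2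
  else 12 * y ^ 2 - 8 * (T + 1) * y + 4 * T

lemma s14f_cases (χ : ℕ → Fin 2) (x : ℕ) : s14f χ x = 1 ∨ s14f χ x = -1 := by
  unfold s14f s14F
  split_ifs <;> simp

lemma s14S_zero (χ : ℕ → Fin 2) : s14S χ 0 = 0 := by
  simp [s14S]

lemma s14S_succ (χ : ℕ → Fin 2) (j : ℕ) : s14S χ (j + 1) = s14S χ j + s14f χ (j + 1) := by
  unfold s14S
  rw [Finset.sum_Ioc_succ_top (Nat.zero_le j)]

lemma s14S_diff (χ : ℕ → Fin 2) {a b : ℕ} (h : a ≤ b) :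
    s14S χ b - s14S χ a = ∑ i ∈ Finset.Ioc a b, s14f χ i := by
  have := Finset.sum_Ioc_consecutive (s14f χ) (Nat.zero_le a) h
  unfold s14S
  linarith

lemma s14S_abs_diff (χ : ℕ → Fin 2) {a b : ℕ} (h : a ≤ b) :
    |s14S χ b - s14S χ a| ≤ (b : ℤ) - (a : ℤ) := by
  rw [s14S_diff χ h]
  calc |∑ i ∈ Finset.Ioc a b, s14f χ i| ≤ ∑ i ∈ Finset.Ioc a b, |s14f χ i| :=
        Finset.abs_sum_le_sum_abs _ _
    _ = ∑ _i ∈ Finset.Ioc a b, (1 : ℤ) := by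
        apply Finset.sum_congr rfl
        intro i _
        rcases s14f_cases χ i with h | h <;> rw [h] <;> simp
    _ = ((b - a : ℕ) : ℤ) := by rw [Finset.sum_const, Nat.card_Ioc]; simp
    _ = (b : ℤ) - a := by
        have := Nat.cast_sub (R := ℤ) h
        omega

lemma s14A (T y a : ℤ) (ha : -y ≤ a) (hT : 2 ≤ T) (hy0 : 0 ≤ y) (hyT : y ≤ T) :
    s14Phi T y ≤ 16 * a + 16 + s14Phi (T - 2) y := by
  unfold s14Phi
  split_ifs with h1 h2 h2
  · linarith
  · nlinarith [mul_nonneg (by linarith : (0:ℤ) ≤ 3 * y - T) (by linarith : (0:ℤ) ≤ 3 * y - T - 1)]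
  · linarith
  · linarith

lemma s14B (T y : ℤ) (hT : 2 ≤ T) (hy2 : 2 ≤ y) (hyT : y ≤ T) :
    s14Phi T y ≤ 16 * y - 16 + s14Phi (T - 2) (y - 2) := by
  unfold s14Phi
  split_ifs with h1 h2 h2
  · linarith
  · linarith
  · nlinarith [mul_nonneg (by linarith : (0:ℤ) ≤ 3 * y - T - 3) (by linarith : (0:ℤ) ≤ T + 6 - 3 * y),
      hyT, hT]
  · linarith

lemma s14C (T y : ℤ) (hT : 2 ≤ T) (hy0 : 0 ≤ y) (hyT : y + 2 ≤ T - 2) :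
    s14Phi T y ≤ -16 * y - 16 + s14Phi (T - 2) (y + 2) := by
  unfold s14Phi
  split_ifs with h1 h2 h2
  · linarith
  · nlinarith [mul_nonneg (by linarith : (0:ℤ) ≤ 3 * y - T + 5) (by linarith : (0:ℤ) ≤ 9 * y - 3 * T + 25),
      hT]
  · linarith
  · linarith

lemma s14B1 (T : ℤ) (hT : 2 ≤ T) : s14Phi T 1 ≤ s14Phi (T - 2) 1 := by
  unfold s14Phi
  split_ifs with h1 h2 h2
  · linarith
  · nlinarith [sq_nonneg (T - 1)]
  · linarith
  · nlinarith [sq_nonneg (T - 1)]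

/-- Core Bellman step inequality for the potential. -/
lemma s14_core (T x e d : ℤ) (he : e = 1 ∨ e = -1) (hd : d = 1 ∨ d = -1)
    (hT : 2 ≤ T) (h1 : |x| ≤ T) (h2 : |x - e - d| ≤ T - 2) :
    s14Phi T |x| ≤ 16 * e * x - 16 * e * d + s14Phi (T - 2) |x - e - d| := by
  rcases he with rfl | rfl <;> rcases hd with rfl | rfl
  · -- e = 1, d = 1 : x' = x - 2
    rw [show x - 1 - 1 = x - 2 from by ring] at h2 ⊢
    rcases le_or_gt 2 x with hx2 | hx2
    · rw [abs_of_nonneg (by linarith : (0:ℤ) ≤ x)] at h1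
      rw [abs_of_nonneg (by linarith : (0:ℤ) ≤ x), abs_of_nonneg (by linarith : (0:ℤ) ≤ x - 2)]
      have := s14B T x hT hx2 h1
      linarith
    · rcases le_or_gt x 0 with hx0 | hx0
      · rw [abs_of_nonpos (by linarith : x - 2 ≤ 0)] at h2
        rw [abs_of_nonpos hx0, abs_of_nonpos (by linarith : x - 2 ≤ 0),
          show -(x - 2) = -x + 2 from by ring]
        have := s14C T (-x) hT (by linarith) (by linarith)
        linarith
      · have hx1 : x = 1 := by omega
        subst hx1
        norm_num
        have := s14B1 T hT
        linarith
  · -- e = 1, d = -1 : x' = x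
    have hx' : x - 1 - (-1) = x := by ring
    rw [hx']
    have := s14A T |x| x (neg_abs_le x) hT (abs_nonneg x) h1
    linarith
  · -- e = -1, d = 1 : x' = x
    have hx' : x - (-1) - 1 = x := by ring
    rw [hx']
    have := s14A T |x| (-x) (by simpa using le_abs_self x) hT (abs_nonneg x) h1
    linarith
  · -- e = -1, d = -1 : x' = x + 2
    rw [show x - (-1) - (-1) = x + 2 from by ring] at h2 ⊢
    rcases le_or_gt x (-2) with hx2 | hx2
    · rw [abs_of_nonpos (by linarith : x ≤ 0)] at h1
      rw [abs_of_nonpos (by linarith : x ≤ 0), abs_of_nonpos (by linarith : x + 2 ≤ 0),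
        show -(x + 2) = -x - 2 from by ring]
      have := s14B T (-x) hT (by linarith) h1
      linarith
    · rcases le_or_gt 0 x with hx0 | hx0
      · rw [abs_of_nonneg (by linarith : (0:ℤ) ≤ x + 2)] at h2
        rw [abs_of_nonneg hx0, abs_of_nonneg (by linarith : (0:ℤ) ≤ x + 2)]
        have := s14C T x hT hx0 (by linarith)
        linarith
      · have hx1 : x = -1 := by omega
        subst hx1
        norm_num
        have := s14B1 T hT
        linarith

/-- Final inequality at `k = 0`. -/
lemma s14_final (N M q : ℤ) (h : N = 2 * M) (h0 : 0 ≤ N) :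
    -12 * N ^ 2 - 44 * N ≤ 11 * (8 * q ^ 2 + (s14Phi N |q| - 8 * M)) := by
  have h8 : 8 * M = 4 * N := by omega
  unfold s14Phi
  rcases abs_cases q with ⟨hq, hq0⟩ | ⟨hq, hq0⟩ <;> rw [hq] <;> split_ifs with hr
  · nlinarith [sq_nonneg (11 * q - N)]
  · have hz : (0:ℤ) ≤ 3 * q - N - 3 := by omega
    nlinarith [sq_nonneg (3 * q - N - 3), mul_nonneg hz h0, hz, h0]
  · nlinarith [sq_nonneg (11 * q + N)]
  · have hz : (0:ℤ) ≤ -3 * q - N - 3 := by omega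
    nlinarith [sq_nonneg (3 * q + N + 3), mul_nonneg hz h0, hz, h0]

lemma s14ind (a b c : Fin 2) :
    4 * (if (a = b ∧ b = c) then (1:ℤ) else 0)
      = 1 + s14F a * s14F b + s14F b * s14F c + s14F a * s14F c := by
  revert a b c; decide

lemma s14f_sq (χ : ℕ → Fin 2) (x : ℕ) : s14f χ x * s14f χ x = 1 := by
  rcases s14f_cases χ x with h | h <;> rw [h] <;> ring

lemma s14g2 (χ : ℕ → Fin 2) (m' : ℕ) : ∑ y ∈ Finset.Icc 1 m', s14f χ y = s14S χ m' := by
  have h : Finset.Icc 1 m' = Finset.Ioc 0 m' := by ext t; simp; omega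
  rw [h, s14S]

lemma s14g3 (χ : ℕ → Fin 2) {x n : ℕ} (hxn : x ≤ n) :
    ∑ y ∈ Finset.Icc 1 (n - x), s14f χ (x + y) = s14S χ n - s14S χ x := by
  rw [s14S_diff χ hxn]
  refine Finset.sum_nbij' (fun y => x + y) (fun z => z - x) ?_ ?_ ?_ ?_ ?_
  · intro a ha; simp [Finset.mem_Icc] at ha; simp [Finset.mem_Ioc]; omega
  · intro a ha; simp [Finset.mem_Ioc] at ha; simp [Finset.mem_Icc]; omega
  · intro a ha; simp [Finset.mem_Icc] at ha; show x + a - x = a; omega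
  · intro a ha; simp [Finset.mem_Ioc] at ha; show x + (a - x) = a; omega
  · intro a _; rfl

lemma s14g5 (χ : ℕ → Fin 2) : ∀ N : ℕ,
    2 * ∑ y ∈ Finset.Ioc 0 N, s14f χ y * s14S χ y = s14S χ N ^ 2 + N := by
  intro N
  induction N with
  | zero => simp [s14S_zero]
  | succ N ih =>
    rw [Finset.sum_Ioc_succ_top (Nat.zero_le N), s14S_succ]
    have hsq := s14f_sq χ (N + 1)
    push_cast
    linear_combination ih + hsq

lemma s14g6 : ∀ N : ℕ, 2 * ∑ x ∈ Finset.Ioc 0 N, (x:ℤ) = (N:ℤ)^2 + N := by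
  intro N
  induction N with
  | zero => simp
  | succ N ih =>
    rw [Finset.sum_Ioc_succ_top (Nat.zero_le N)]
    push_cast
    linear_combination ih

def s14T (n : ℕ) (χ : ℕ → Fin 2) : ℕ :=
  (((Finset.Icc 1 n) ×ˢ (Finset.Icc 1 n) ×ˢ (Finset.Icc 1 n)).filter
    (fun p => p.1 + p.2.1 = p.2.2 ∧ χ p.1 = χ p.2.1 ∧ χ p.2.1 = χ p.2.2)).card

lemma s14_count (χ : ℕ → Fin 2) (n : ℕ) :
    8 * (s14T n χ : ℤ) = (n:ℤ)^2 - 3*(n:ℤ)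
      + 2 * (s14S χ n ^ 2 + ∑ x ∈ Finset.Icc 1 n, s14f χ x * s14S χ (n - x)) := by
  have hA : (s14T n χ : ℤ) = ∑ x ∈ Finset.Icc 1 n, ∑ y ∈ Finset.Icc 1 (n - x),
      (if χ x = χ y ∧ χ y = χ (x + y) then (1:ℤ) else 0) := by
    unfold s14T
    rw [Finset.card_filter]
    push_cast
    rw [Finset.sum_product]
    refine Finset.sum_congr rfl (fun x hx => ?_)
    rw [Finset.sum_product]
    have hz : ∀ y ∈ Finset.Icc 1 n, (∑ z ∈ Finset.Icc 1 n,
        if x + y = z ∧ χ x = χ y ∧ χ y = χ z then (1:ℤ) else 0)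
        = (if x + y ≤ n then (if χ x = χ y ∧ χ y = χ (x+y) then (1:ℤ) else 0) else 0) := by
      intro y hy
      simp only [Finset.mem_Icc] at hy
      by_cases hxy : x + y ≤ n
      · rw [Finset.sum_eq_single_of_mem (x+y) (by simp [Finset.mem_Icc]; omega)]
        · simp [hxy]
        · intro b _ hbne
          have hne : ¬ (x + y = b) := fun h => hbne h.symm
          simp [hne]
      · rw [Finset.sum_eq_zero, if_neg hxy]
        intro z hzz
        simp only [Finset.mem_Icc] at hzz
        have hne : ¬ (x + y = z) := by omega
        simp [hne]
    rw [Finset.sum_congr rfl hz]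
    rw [← Finset.sum_filter]
    have hfil : Finset.filter (fun y => x + y ≤ n) (Finset.Icc 1 n) = Finset.Icc 1 (n - x) := by
      ext t; simp [Finset.mem_filter, Finset.mem_Icc]; omega
    rw [hfil]
  have hB : 4 * (s14T n χ : ℤ) = ∑ x ∈ Finset.Icc 1 n,
      (((n - x : ℕ) : ℤ) + s14f χ x * s14S χ (n - x)
        + (∑ y ∈ Finset.Icc 1 (n - x), s14f χ y * s14f χ (x + y))
        + s14f χ x * (s14S χ n - s14S χ x)) := by
    rw [hA, Finset.mul_sum]
    refine Finset.sum_congr rfl (fun x hx => ?_)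
    simp only [Finset.mem_Icc] at hx
    rw [Finset.mul_sum]
    have hpt : ∀ y ∈ Finset.Icc 1 (n-x), 4 * (if χ x = χ y ∧ χ y = χ (x+y) then (1:ℤ) else 0)
        = 1 + s14f χ x * s14f χ y + s14f χ y * s14f χ (x+y) + s14f χ x * s14f χ (x+y) := by
      intro y _
      exact s14ind (χ x) (χ y) (χ (x+y))
    rw [Finset.sum_congr rfl hpt]
    rw [Finset.sum_add_distrib, Finset.sum_add_distrib, Finset.sum_add_distrib]
    have e1 : ∑ _y ∈ Finset.Icc 1 (n-x), (1:ℤ) = ((n - x:ℕ):ℤ) := by simp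
    have e2 : ∑ y ∈ Finset.Icc 1 (n-x), s14f χ x * s14f χ y
        = s14f χ x * s14S χ (n - x) := by
      rw [← Finset.mul_sum, s14g2]
    have e4 : ∑ y ∈ Finset.Icc 1 (n-x), s14f χ x * s14f χ (x + y)
        = s14f χ x * (s14S χ n - s14S χ x) := by
      rw [← Finset.mul_sum, s14g3 χ hx.2]
    rw [e1, e2, e4]
  have hC : ∑ x ∈ Finset.Icc 1 n, ∑ y ∈ Finset.Icc 1 (n - x), s14f χ y * s14f χ (x + y)
      = ∑ y ∈ Finset.Icc 1 n, s14f χ y * (s14S χ n - s14S χ y) := by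
    have h1 : ∀ x, ∑ y ∈ Finset.Icc 1 (n - x), s14f χ y * s14f χ (x + y)
        = ∑ y ∈ Finset.Icc 1 n, (if x + y ≤ n then s14f χ y * s14f χ (x + y) else 0) := by
      intro x
      rw [← Finset.sum_filter]
      have hfil : Finset.filter (fun y => x + y ≤ n) (Finset.Icc 1 n) = Finset.Icc 1 (n - x) := by
        ext t; simp [Finset.mem_filter, Finset.mem_Icc]; omega
      rw [hfil]
    calc ∑ x ∈ Finset.Icc 1 n, ∑ y ∈ Finset.Icc 1 (n - x), s14f χ y * s14f χ (x + y)
        = ∑ x ∈ Finset.Icc 1 n, ∑ y ∈ Finset.Icc 1 n,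
            (if x + y ≤ n then s14f χ y * s14f χ (x + y) else 0) :=
          Finset.sum_congr rfl (fun x _ => h1 x)
      _ = ∑ y ∈ Finset.Icc 1 n, ∑ x ∈ Finset.Icc 1 n,
            (if x + y ≤ n then s14f χ y * s14f χ (x + y) else 0) := Finset.sum_comm
      _ = ∑ y ∈ Finset.Icc 1 n, ∑ x ∈ Finset.Icc 1 (n - y), s14f χ y * s14f χ (x + y) := by
          refine Finset.sum_congr rfl (fun y _ => ?_)
          rw [← Finset.sum_filter]
          have hfil : Finset.filter (fun x => x + y ≤ n) (Finset.Icc 1 n)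
              = Finset.Icc 1 (n - y) := by
            ext t; simp [Finset.mem_filter, Finset.mem_Icc]; omega
          rw [hfil]
      _ = ∑ y ∈ Finset.Icc 1 n, s14f χ y * (s14S χ n - s14S χ y) := by
          refine Finset.sum_congr rfl (fun y hy => ?_)
          simp only [Finset.mem_Icc] at hy
          rw [← Finset.mul_sum]
          congr 1
          calc ∑ x ∈ Finset.Icc 1 (n - y), s14f χ (x + y)
              = ∑ x ∈ Finset.Icc 1 (n - y), s14f χ (y + x) :=
                Finset.sum_congr rfl (fun t _ => by rw [Nat.add_comm])
            _ = s14S χ n - s14S χ y := s14g3 χ hy.2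
  have hIccIoc : Finset.Icc 1 n = Finset.Ioc 0 n := by ext t; simp; omega
  have t1 : 2 * ∑ x ∈ Finset.Icc 1 n, ((n - x : ℕ):ℤ) = (n:ℤ)^2 - n := by
    have hcongr : ∀ x ∈ Finset.Icc 1 n, ((n - x:ℕ):ℤ) = (n:ℤ) - (x:ℤ) := by
      intro x hx; simp only [Finset.mem_Icc] at hx; omega
    rw [Finset.sum_congr rfl hcongr, Finset.sum_sub_distrib, Finset.sum_const, Nat.card_Icc]
    have h6 := s14g6 n
    rw [hIccIoc] at *
    simp only [nsmul_eq_mul]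
    push_cast
    linarith [h6]
  have hD : ∑ x ∈ Finset.Icc 1 n, s14f χ x * (s14S χ n - s14S χ x)
      = s14S χ n ^ 2 - ∑ x ∈ Finset.Icc 1 n, s14f χ x * s14S χ x := by
    have hcongr : ∀ x ∈ Finset.Icc 1 n, s14f χ x * (s14S χ n - s14S χ x)
        = s14f χ x * s14S χ n - s14f χ x * s14S χ x := fun x _ => by ring
    rw [Finset.sum_congr rfl hcongr, Finset.sum_sub_distrib, ← Finset.sum_mul, s14g2]
    ring_nf
  have t5 : 2 * ∑ y ∈ Finset.Icc 1 n, s14f χ y * s14S χ y = s14S χ n ^ 2 + n := by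
    rw [hIccIoc]; exact s14g5 χ n
  rw [Finset.sum_add_distrib, Finset.sum_add_distrib, Finset.sum_add_distrib] at hB
  rw [hC, hD] at hB
  linarith [hB, t1, t5]

lemma s14_regroup (χ : ℕ → Fin 2) (n m : ℕ) (hnm : n = 2 * m) :
    ∑ x ∈ Finset.Icc 1 n, s14f χ x * s14S χ (n - x)
      = ∑ j ∈ Finset.range m,
          (s14f χ (j+1) * s14S χ (n - (j+1)) + s14f χ (n - j) * s14S χ j) := by
  have hIccIoc : Finset.Icc 1 n = Finset.Ioc 0 n := by ext t; simp; omega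
  rw [hIccIoc]
  rw [← Finset.sum_Ioc_consecutive (fun x => s14f χ x * s14S χ (n - x))
    (Nat.zero_le m) (by omega : m ≤ n)]
  rw [Finset.sum_add_distrib]
  congr 1
  · have h1 : Finset.Ioc 0 m = Finset.Ico 1 (m+1) := by ext t; simp; omega
    rw [h1, Finset.sum_Ico_eq_sum_range]
    simp only [Nat.add_sub_cancel]
    refine Finset.sum_congr rfl (fun j _ => ?_)
    rw [Nat.add_comm 1 j]
  · refine Finset.sum_nbij' (fun x => n - x) (fun j => n - j) ?_ ?_ ?_ ?_ ?_
    · intro a ha; simp only [Finset.mem_Ioc] at ha; simp only [Finset.mem_range]; omega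
    · intro a ha; simp only [Finset.mem_range] at ha; simp only [Finset.mem_Ioc]; omega
    · intro a ha; simp only [Finset.mem_Ioc] at ha; show n - (n - a) = a; omega
    · intro a ha; simp only [Finset.mem_range] at ha; show n - (n - a) = a; omega
    · intro a ha
      simp only [Finset.mem_Ioc] at ha
      show s14f χ a * s14S χ (n - a) = s14f χ (n - (n - a)) * s14S χ (n - a)
      rw [show n - (n - a) = a from by omega]

def s14W (χ : ℕ → Fin 2) (n m k : ℕ) : ℤ :=
  8 * s14S χ k * (s14S χ (n - k) - s14S χ k)
    + s14Phi ((n:ℤ) - 2 * (k:ℤ)) |s14S χ (n - k) - s14S χ k|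
    - 8 * ((m:ℤ) - (k:ℤ))

lemma s14_key (χ : ℕ → Fin 2) (n m : ℕ) (hnm : n = 2 * m) :
    ∀ d : ℕ, d ≤ m → s14W χ n m (m - d) ≤ 8 * ∑ j ∈ Finset.Ico (m - d) m,
      (s14f χ (j+1) * s14S χ (n - (j+1)) + s14f χ (n - j) * s14S χ j) := by
  intro d
  induction d with
  | zero =>
    intro _
    rw [Nat.sub_zero, Finset.Ico_self, Finset.sum_empty]
    unfold s14W
    rw [show n - m = m from by omega]
    simp only [sub_self, abs_zero]
    rw [show ((n:ℤ) - 2 * (m:ℤ)) = 0 from by push_cast [hnm]; ring]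
    norm_num [s14Phi]
  | succ d ih =>
    intro hd
    have hdm : d ≤ m := by omega
    have ih2 := ih hdm
    set k := m - (d+1) with hkdef
    have hkm : k < m := by omega
    have hk1 : m - d = k + 1 := by omega
    rw [hk1] at ih2
    rw [Finset.sum_eq_sum_Ico_succ_bot hkm]
    set p := s14S χ k with hp
    set q := s14S χ (n - k) with hq
    set e := s14f χ (k+1) with he
    set dd := s14f χ (n - k) with hdd
    have hk_le : k ≤ n - k := by omega
    have hkn : k + 1 ≤ n - (k+1) := by omega
    have hSk1 : s14S χ (k+1) = p + e := by rw [hp, he]; exact s14S_succ χ k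
    have hnk1 : n - (k+1) = (n - k) - 1 := by omega
    have hnkpos : (n - k - 1) + 1 = n - k := by omega
    have hSnk1 : s14S χ (n - (k+1)) = q - dd := by
      have h := s14S_succ χ (n - k - 1)
      rw [hnkpos] at h
      rw [hnk1, hq, hdd]
      linarith [h]
    have habs1 : |q - p| ≤ (n:ℤ) - 2*(k:ℤ) := by
      have h := s14S_abs_diff χ hk_le
      rw [← hp, ← hq] at h
      have hcast1 : ((n - k : ℕ):ℤ) = (n:ℤ) - (k:ℤ) := by omega
      rw [hcast1] at h
      linarith [h]
    have habs2 : |q - p - e - dd| ≤ (n:ℤ) - 2*(k:ℤ) - 2 := by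
      have h := s14S_abs_diff χ hkn
      rw [hSnk1, hSk1] at h
      have hcast2 : ((n - (k+1) : ℕ):ℤ) = (n:ℤ) - (k:ℤ) - 1 := by omega
      rw [hcast2] at h
      rw [show q - dd - (p + e) = q - p - e - dd from by ring] at h
      push_cast at h
      linarith [h]
    have hT2 : (2:ℤ) ≤ (n:ℤ) - 2*(k:ℤ) := by omega
    have hcore := s14_core ((n:ℤ) - 2*(k:ℤ)) (q - p) e dd (s14f_cases χ (k+1))
      (s14f_cases χ (n-k)) hT2 habs1 habs2
    have hee : e * e = 1 := s14f_sq χ (k+1)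
    unfold s14W at ih2 ⊢
    rw [hSk1, hSnk1] at ih2
    rw [show ((n:ℤ) - 2 * ((k+1:ℕ):ℤ)) = (n:ℤ) - 2*(k:ℤ) - 2 from by push_cast; ring] at ih2
    rw [show q - dd - (p + e) = q - p - e - dd from by ring] at ih2
    rw [show ((m:ℤ) - ((k+1:ℕ):ℤ)) = (m:ℤ) - (k:ℤ) - 1 from by push_cast; ring] at ih2
    rw [hSnk1]
    rw [← hp, ← hq]
    linarith [hcore, hee, ih2]

lemma s14_even (χ : ℕ → Fin 2) (m : ℕ) (hm : 1 ≤ m) :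
    8 * ((2*m : ℕ):ℤ)^2 - 44 * ((2*m:ℕ):ℤ) ≤ 88 * (s14T (2*m) χ : ℤ) := by
  set n := 2*m with hn
  have hcount := s14_count χ n
  have hreg := s14_regroup χ n m hn
  have hkey := s14_key χ n m hn m le_rfl
  rw [Nat.sub_self] at hkey
  have hW0 : s14W χ n m 0 = s14Phi ((n:ℤ)) |s14S χ n| - 8*(m:ℤ) := by
    unfold s14W
    rw [s14S_zero]
    norm_num
  rw [hW0] at hkey
  have hrange : Finset.Ico 0 m = Finset.range m := by
    ext t; simp
  rw [hrange, ← hreg] at hkey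
  have hfin := s14_final ((n:ℤ)) ((m:ℤ)) (s14S χ n) (by push_cast [hn]; ring)
    (by positivity)
  linarith [hcount, hkey, hfin]

lemma s14_mono (n : ℕ) (χ : ℕ → Fin 2) : s14T (n+1) χ ≤ s14T n χ + n := by
  classical
  unfold s14T
  set D := ((((Finset.Icc 1 (n+1)) ×ˢ (Finset.Icc 1 (n+1)) ×ˢ (Finset.Icc 1 (n+1))).filter
    (fun p => p.1 + p.2.1 = p.2.2 ∧ χ p.1 = χ p.2.1 ∧ χ p.2.1 = χ p.2.2)).filter
      (fun p => p.2.2 = n+1)) with hD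
  have hsub : (((Finset.Icc 1 (n+1)) ×ˢ (Finset.Icc 1 (n+1)) ×ˢ (Finset.Icc 1 (n+1))).filter
      (fun p => p.1 + p.2.1 = p.2.2 ∧ χ p.1 = χ p.2.1 ∧ χ p.2.1 = χ p.2.2))
      ⊆ (((Finset.Icc 1 n) ×ˢ (Finset.Icc 1 n) ×ˢ (Finset.Icc 1 n)).filter
      (fun p => p.1 + p.2.1 = p.2.2 ∧ χ p.1 = χ p.2.1 ∧ χ p.2.1 = χ p.2.2)) ∪ D := by
    intro p hp
    rw [hD]
    simp only [Finset.mem_filter, Finset.mem_product, Finset.mem_Icc, Finset.mem_union] at hp ⊢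
    obtain ⟨⟨⟨hx1, hx2⟩, ⟨hy1, hy2⟩, hz1, hz2⟩, heq, hc⟩ := hp
    by_cases hz : p.2.2 = n+1
    · right
      exact ⟨⟨⟨⟨hx1, hx2⟩, ⟨hy1, hy2⟩, hz1, hz2⟩, heq, hc⟩, hz⟩
    · left
      exact ⟨⟨⟨hx1, by omega⟩, ⟨hy1, by omega⟩, hz1, by omega⟩, heq, hc⟩
  have hDcard : D.card ≤ n := by
    have hmap : ∀ p ∈ D, p.1 ∈ Finset.Icc 1 n := by
      intro p hp
      rw [hD] at hp
      simp only [Finset.mem_filter, Finset.mem_product, Finset.mem_Icc] at hp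
      simp only [Finset.mem_Icc]
      omega
    have hinj : Set.InjOn (fun p : ℕ × ℕ × ℕ => p.1) ↑D := by
      rintro ⟨x, y, z⟩ h1 ⟨x', y', z'⟩ h2 hxx
      rw [hD] at h1 h2
      simp only [Finset.mem_coe, Finset.mem_filter, Finset.mem_product, Finset.mem_Icc] at h1 h2
      have hxx' : x = x' := hxx
      simp only [Prod.mk.injEq]
      omega
    calc D.card ≤ (Finset.Icc 1 n).card := Finset.card_le_card_of_injOn _ hmap hinj
      _ = n := by rw [Nat.card_Icc]; omega
  calc (((Finset.Icc 1 (n+1)) ×ˢ (Finset.Icc 1 (n+1)) ×ˢ (Finset.Icc 1 (n+1))).filter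
      (fun p => p.1 + p.2.1 = p.2.2 ∧ χ p.1 = χ p.2.1 ∧ χ p.2.1 = χ p.2.2)).card
      ≤ ((((Finset.Icc 1 n) ×ˢ (Finset.Icc 1 n) ×ˢ (Finset.Icc 1 n)).filter
      (fun p => p.1 + p.2.1 = p.2.2 ∧ χ p.1 = χ p.2.1 ∧ χ p.2.1 = χ p.2.2)) ∪ D).card :=
        Finset.card_le_card hsub
    _ ≤ _ := by
        refine le_trans (Finset.card_union_le _ _) ?_
        omega

lemma s14_all (n : ℕ) (hn : 1 ≤ n) (χ : ℕ → Fin 2) :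
    8*(n:ℤ)^2 - 176*(n:ℤ) ≤ 88 * (s14T n χ : ℤ) := by
  rcases Nat.even_or_odd n with he | ho
  · obtain ⟨r, hr⟩ := he
    have hm : 1 ≤ r := by omega
    have h := s14_even χ r hm
    rw [show 2*r = n from by omega] at h
    have hn0 : (0:ℤ) ≤ (n:ℤ) := by positivity
    linarith
  · have hm : 1 ≤ (n+1)/2 := by omega
    have h := s14_even χ ((n+1)/2) hm
    rw [show 2*((n+1)/2) = n + 1 from by rcases ho with ⟨t, ht⟩; omega] at h
    have hmono := s14_mono n χ
    have hc : (s14T (n+1) χ : ℤ) ≤ (s14T n χ : ℤ) + n := by exact_mod_cast hmono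
    have hn1 : (1:ℤ) ≤ (n:ℤ) := by exact_mod_cast hn
    push_cast at h
    linarith [h, hc, hn1]

/-- There is a constant `C ≥ 0` such that for every `n ≥ 1` and every 2-coloring of `[n]`,
the number of monochromatic Schur triples `(x,y,z) ∈ [n]³` with `x + y = z` is at least
`n²/11 − C·n`. -/
theorem stmt14 :
    ∃ C : ℝ, 0 ≤ C ∧ ∀ n : ℕ, 0 < n → ∀ χ : ℕ → Fin 2,
      (n : ℝ) ^ 2 / 11 - C * n ≤
      ((((Finset.Icc 1 n) ×ˢ (Finset.Icc 1 n) ×ˢ (Finset.Icc 1 n)).filter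
        (fun p => p.1 + p.2.1 = p.2.2 ∧
          χ p.1 = χ p.2.1 ∧ χ p.2.1 = χ p.2.2)).card : ℝ) := by
  refine ⟨2, by norm_num, ?_⟩
  intro n hn χ
  have h := s14_all n hn χ
  have hR : 8*(n:ℝ)^2 - 176*(n:ℝ) ≤ 88 * ((s14T n χ : ℕ):ℝ) := by exact_mod_cast h
  have hEq : ((((Finset.Icc 1 n) ×ˢ (Finset.Icc 1 n) ×ˢ (Finset.Icc 1 n)).filter
      (fun p => p.1 + p.2.1 = p.2.2 ∧ χ p.1 = χ p.2.1 ∧ χ p.2.1 = χ p.2.2)).card : ℝ)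
      = ((s14T n χ : ℕ):ℝ) := rfl
  rw [hEq]
  linarith
end

section
/- Let a, b, c be positive integers, let n be a positive integer, and let χ be a 2-coloring of [n]. Let ν_χ denote the number of non-monochromatic ordered triples (x,y,z) ∈ [n]³ with a·x + b·y = c·z. Define D_xy = #{(i,j) ∈ [n]² : χ(i) ≠ χ(j) and there exists z ∈ [n] with a·i + b·j = c·z}, D_xz = #{(i,j) ∈ [n]² : χ(i) ≠ χ(j) and there exists y ∈ [n] with a·i + b·y = c·j}, and D_yz = #{(i,j) ∈ [n]² : χ(i) ≠ χ(j) and there exists x ∈ [n] with a·x + b·i = c·j}. Then 2·ν_χ = D_xy + D_xz + D_yz. -/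
open scoped Classical

/-- For the equation `a·x + b·y = c·z` and a 2-coloring `χ` of `[n]`, twice the number
`ν_χ` of non-monochromatic solutions in `[n]³` equals `D_xy + D_xz + D_yz`, where
`D_xy`, `D_xz`, `D_yz` count differently-colored pairs occurring as the corresponding
coordinates of some solution. -/
theorem stmt15 (a b c n : ℕ) (ha : 0 < a) (hb : 0 < b) (hc : 0 < c) (hn : 0 < n)
    (χ : ℕ → Fin 2) :
    2 * (((Finset.Icc 1 n) ×ˢ (Finset.Icc 1 n) ×ˢ (Finset.Icc 1 n)).filter
        (fun p => a * p.1 + b * p.2.1 = c * p.2.2 ∧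
          ¬(χ p.1 = χ p.2.1 ∧ χ p.2.1 = χ p.2.2))).card
    = (((Finset.Icc 1 n) ×ˢ (Finset.Icc 1 n)).filter
        (fun p : ℕ × ℕ => χ p.1 ≠ χ p.2 ∧
          ∃ z ∈ Finset.Icc 1 n, a * p.1 + b * p.2 = c * z)).card
      + (((Finset.Icc 1 n) ×ˢ (Finset.Icc 1 n)).filter
          (fun p : ℕ × ℕ => χ p.1 ≠ χ p.2 ∧
            ∃ y ∈ Finset.Icc 1 n, a * p.1 + b * y = c * p.2)).card
      + (((Finset.Icc 1 n) ×ˢ (Finset.Icc 1 n)).filter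
          (fun p : ℕ × ℕ => χ p.1 ≠ χ p.2 ∧
            ∃ x ∈ Finset.Icc 1 n, a * x + b * p.1 = c * p.2)).card := by
  classical
  have hxy : (((Finset.Icc 1 n) ×ˢ (Finset.Icc 1 n)).filter (fun p : ℕ × ℕ => χ p.1 ≠ χ p.2 ∧
        ∃ z ∈ (Finset.Icc 1 n), a * p.1 + b * p.2 = c * z)).card
      = (((Finset.Icc 1 n) ×ˢ (Finset.Icc 1 n) ×ˢ (Finset.Icc 1 n)).filter (fun p : ℕ × ℕ × ℕ =>
          (a * p.1 + b * p.2.1 = c * p.2.2) ∧ χ p.1 ≠ χ p.2.1)).card := by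
    symm
    apply Finset.card_bij (fun p _ => (p.1, p.2.1))
    · intro p hp
      simp only [Finset.mem_filter, Finset.mem_product] at hp ⊢
      exact ⟨⟨hp.1.1, hp.1.2.1⟩, hp.2.2, p.2.2, hp.1.2.2, hp.2.1⟩
    · intro p hp q hq h
      simp only [Finset.mem_filter, Finset.mem_product] at hp hq
      obtain ⟨h1, h2⟩ := Prod.mk.inj h
      have h3 : c * p.2.2 = c * q.2.2 := by
        rw [← hp.2.1, ← hq.2.1, h1, h2]
      have h4 : p.2.2 = q.2.2 := Nat.eq_of_mul_eq_mul_left hc h3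
      exact Prod.ext h1 (Prod.ext h2 h4)
    · intro p hp
      simp only [Finset.mem_filter, Finset.mem_product] at hp
      obtain ⟨⟨h1, h2⟩, hne, z, hz, heq⟩ := hp
      exact ⟨(p.1, p.2, z), by
        simp only [Finset.mem_filter, Finset.mem_product]
        exact ⟨⟨h1, h2, hz⟩, heq, hne⟩, rfl⟩
  have hxz : (((Finset.Icc 1 n) ×ˢ (Finset.Icc 1 n)).filter (fun p : ℕ × ℕ => χ p.1 ≠ χ p.2 ∧
        ∃ y ∈ (Finset.Icc 1 n), a * p.1 + b * y = c * p.2)).card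
      = (((Finset.Icc 1 n) ×ˢ (Finset.Icc 1 n) ×ˢ (Finset.Icc 1 n)).filter (fun p : ℕ × ℕ × ℕ =>
          (a * p.1 + b * p.2.1 = c * p.2.2) ∧ χ p.1 ≠ χ p.2.2)).card := by
    symm
    apply Finset.card_bij (fun p _ => (p.1, p.2.2))
    · intro p hp
      simp only [Finset.mem_filter, Finset.mem_product] at hp ⊢
      exact ⟨⟨hp.1.1, hp.1.2.2⟩, hp.2.2, p.2.1, hp.1.2.1, hp.2.1⟩
    · intro p hp q hq h
      simp only [Finset.mem_filter, Finset.mem_product] at hp hq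
      obtain ⟨h1, h2⟩ := Prod.mk.inj h
      have h3 : a * p.1 + b * p.2.1 = a * p.1 + b * q.2.1 := by
        rw [hp.2.1, h2, ← hq.2.1, ← h1]
      have h4 : p.2.1 = q.2.1 :=
        Nat.eq_of_mul_eq_mul_left hb (Nat.add_left_cancel h3)
      exact Prod.ext h1 (Prod.ext h4 h2)
    · intro p hp
      simp only [Finset.mem_filter, Finset.mem_product] at hp
      obtain ⟨⟨h1, h2⟩, hne, y, hy, heq⟩ := hp
      exact ⟨(p.1, y, p.2), by
        simp only [Finset.mem_filter, Finset.mem_product]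
        exact ⟨⟨h1, hy, h2⟩, heq, hne⟩, rfl⟩
  have hyz : (((Finset.Icc 1 n) ×ˢ (Finset.Icc 1 n)).filter (fun p : ℕ × ℕ => χ p.1 ≠ χ p.2 ∧
        ∃ x ∈ (Finset.Icc 1 n), a * x + b * p.1 = c * p.2)).card
      = (((Finset.Icc 1 n) ×ˢ (Finset.Icc 1 n) ×ˢ (Finset.Icc 1 n)).filter (fun p : ℕ × ℕ × ℕ =>
          (a * p.1 + b * p.2.1 = c * p.2.2) ∧ χ p.2.1 ≠ χ p.2.2)).card := by
    symm
    apply Finset.card_bij (fun p _ => (p.2.1, p.2.2))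
    · intro p hp
      simp only [Finset.mem_filter, Finset.mem_product] at hp ⊢
      exact ⟨⟨hp.1.2.1, hp.1.2.2⟩, hp.2.2, p.1, hp.1.1, hp.2.1⟩
    · intro p hp q hq h
      simp only [Finset.mem_filter, Finset.mem_product] at hp hq
      obtain ⟨h1, h2⟩ := Prod.mk.inj h
      have h3 : a * p.1 + b * p.2.1 = a * q.1 + b * p.2.1 := by
        rw [hp.2.1, h2, ← hq.2.1, h1]
      have h4 : p.1 = q.1 :=
        Nat.eq_of_mul_eq_mul_left ha (Nat.add_right_cancel h3)
      exact Prod.ext h4 (Prod.ext h1 h2)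
    · intro p hp
      simp only [Finset.mem_filter, Finset.mem_product] at hp
      obtain ⟨⟨h1, h2⟩, hne, x, hx, heq⟩ := hp
      exact ⟨(x, p.1, p.2), by
        simp only [Finset.mem_filter, Finset.mem_product]
        exact ⟨⟨hx, h1, h2⟩, heq, hne⟩, rfl⟩
  simp only [hxy, hxz, hyz]
  rw [Finset.card_filter, Finset.card_filter, Finset.card_filter, Finset.card_filter,
    Finset.mul_sum, ← Finset.sum_add_distrib, ← Finset.sum_add_distrib]
  apply Finset.sum_congr rfl
  intro p _
  by_cases heq : a * p.1 + b * p.2.1 = c * p.2.2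
  · simp only [heq, true_and]
    generalize χ p.1 = u
    generalize χ p.2.1 = v
    generalize χ p.2.2 = w
    fin_cases u <;> fin_cases v <;> fin_cases w <;> simp
  · simp [heq]
end

section
/- Let m ≥ 0 be a real number and let r₀, r₁, r₂ be real numbers with 0 ≤ rᵢ ≤ m for each i. Then r₀(m − r₀) + r₁(m − r₂) + r₂(m − r₁) ≤ 5m²/4, with equality attained at (r₀, r₁, r₂) = (m/2, 0, m). -/
/-- For real `m ≥ 0` and `0 ≤ r₀, r₁, r₂ ≤ m`, we have
`r₀(m − r₀) + r₁(m − r₂) + r₂(m − r₁) ≤ 5m²/4`, with equality attained at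
`(r₀, r₁, r₂) = (m/2, 0, m)`. -/
theorem stmt18 (m r0 r1 r2 : ℝ) (hm : 0 ≤ m)
    (h0 : 0 ≤ r0 ∧ r0 ≤ m) (h1 : 0 ≤ r1 ∧ r1 ≤ m) (h2 : 0 ≤ r2 ∧ r2 ≤ m) :
    r0 * (m - r0) + r1 * (m - r2) + r2 * (m - r1) ≤ 5 * m ^ 2 / 4
      ∧ (m / 2) * (m - m / 2) + 0 * (m - m) + m * (m - 0) = 5 * m ^ 2 / 4 := by
  obtain ⟨a0, b0⟩ := h0; obtain ⟨a1, b1⟩ := h1; obtain ⟨a2, b2⟩ := h2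
  constructor
  · nlinarith [sq_nonneg (m - 2*r0), mul_nonneg a1 (sub_nonneg.2 b2),
      mul_nonneg a2 (sub_nonneg.2 b1), mul_nonneg a1 a2,
      mul_nonneg (sub_nonneg.2 b1) (sub_nonneg.2 b2)]
  · ring
end
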